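/- Fix integer K ≥ 2, arm means 1 > θ_1 > θ_2 > … > θ_K > 0, cost c > 0 and ε ∈ [0,1/2). Then every static policy u (i.e., every u = (k) and every u = (k,ℓ,m) with k,ℓ,m ∈ {1,…,K}) satisfies μ(u) ≤ max( θ_1 , μ((1,2)) ), where μ((1,2)) = −c + (1−ε)θ_1 + p0(θ_1)θ_2. That is, the optimal static policy is either (1) (play arm 1 without measuring) or (1,2) (measure arm 1, play arm 1 if the measurement is 1 and arm 2 otherwise). -/

import Mathlib

/-!
Write `V(x, y) = (1 - ε) x + p0(x) y` for the gross reward of measuring an arm of mean `x` and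
falling back to an arm of mean `y`. Expanding `p0`, `V(x, y) = (1 - ε)(x + y) - (1 - 2ε) x y` is
symmetric, and it is nondecreasing in `y` since `p0 ≥ 0`. Hence for `k ≠ m`,
`V(θ_k, θ_m) ≤ V(θ_k, θ_1) = V(θ_1, θ_k) ≤ V(θ_1, θ_2)`, so `(1,2)` dominates every policy
`(k,k,m)` with `m ≠ k`. In every other policy the arm means enter the reward with nonnegative
weights of total at most `1` (this is where `ε ≤ p0(x) ≤ 1 - ε` for `x ∈ [0,1]` is needed), so
its reward is at most `θ_1`.
-/

noncomputable section

/-- `p0 ε x = ε x + (1−ε)(1−x)`: probability that the ε-noisy measurement of a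
Bernoulli(x) arm returns 0. -/
def p0 (ε x : ℝ) : ℝ := ε * x + (1 - ε) * (1 - x)

/-- A static policy: either play arm `k` directly, or measure arm `k` and play
arm `l` if the measurement is 1 and arm `m` if it is 0. -/
inductive Policy where
  | play (k : ℕ)
  | meas (k l m : ℕ)
deriving DecidableEq

/-- Mean reward `μ(u)` of a static policy `u`, with arm means `θ`, noise level `ε`,
and measurement cost `c`. -/
def reward (θ : ℕ → ℝ) (ε c : ℝ) : Policy → ℝ
  | .play k => θ k
  | .meas k l m =>
      -c + (if l = k then (1 - ε) * θ k else (1 - p0 ε (θ k)) * θ l)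
         + (if m = k then ε * θ k else p0 ε (θ k) * θ m)

/-- A static policy is valid for `K` arms if all the arms it mentions lie in `{1,…,K}`. -/
def validPolicy (K : ℕ) : Policy → Prop
  | .play k => 1 ≤ k ∧ k ≤ K
  | .meas k l m => (1 ≤ k ∧ k ≤ K) ∧ (1 ≤ l ∧ l ≤ K) ∧ (1 ≤ m ∧ m ≤ K)

lemma measure_fallback_comm (ε x y : ℝ) :
    (1 - ε) * x + p0 ε x * y = (1 - ε) * y + p0 ε y * x := by
  unfold p0
  ring

section p0

variable {ε x : ℝ}

lemma le_p0 (hε : ε ≤ 1 / 2) (hx : x ≤ 1) : ε ≤ p0 ε x := by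
  unfold p0
  nlinarith

lemma p0_le_one_sub (hε : ε ≤ 1 / 2) (hx : 0 ≤ x) : p0 ε x ≤ 1 - ε := by
  unfold p0
  nlinarith

end p0

section Arms

variable {K : ℕ} {θ : ℕ → ℝ} {ε c : ℝ}

lemma mem_Icc_of_antitoneOn (hθ : AntitoneOn θ (Set.Icc 1 K)) {i : ℕ} (hi : i ∈ Set.Icc 1 K) :
    θ i ∈ Set.Icc (θ K) (θ 1) :=
  ⟨hθ hi ⟨hi.1.trans hi.2, le_rfl⟩ hi.2, hθ ⟨le_rfl, hi.1.trans hi.2⟩ hi hi.1⟩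

lemma reward_meas_le_theta_one (hθ : AntitoneOn θ (Set.Icc 1 K)) (hθK : 0 ≤ θ K)
    (hθ1 : θ 1 ≤ 1) (hc : 0 ≤ c) (hε0 : 0 ≤ ε) (hε : ε ≤ 1 / 2) {k l m : ℕ}
    (hk : k ∈ Set.Icc 1 K) (hl : l ∈ Set.Icc 1 K) (hm : m ∈ Set.Icc 1 K)
    (hklm : m = k ∨ l ≠ k) : reward θ ε c (.meas k l m) ≤ θ 1 := by
  obtain ⟨hk0, hk1⟩ := mem_Icc_of_antitoneOn hθ hk
  obtain ⟨hl0, hl1⟩ := mem_Icc_of_antitoneOn hθ hl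
  obtain ⟨hm0, hm1⟩ := mem_Icc_of_antitoneOn hθ hm
  have hp_lo := le_p0 hε (hk1.trans hθ1)
  have hp_hi := p0_le_one_sub hε (hθK.trans hk0)
  simp only [reward]
  rcases hklm with rfl | hlk
  · rw [if_pos rfl]
    split_ifs <;> nlinarith
  · rw [if_neg hlk]
    split_ifs <;> nlinarith

lemma reward_meas_self_le_reward_one_two (hθ : AntitoneOn θ (Set.Icc 1 K)) (hθ1 : θ 1 ≤ 1)
    (hε0 : 0 ≤ ε) (hε : ε ≤ 1 / 2) {k m : ℕ} (hk : k ∈ Set.Icc 1 K) (hm : m ∈ Set.Icc 1 K)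
    (hmk : m ≠ k) : reward θ ε c (.meas k k m) ≤ reward θ ε c (.meas 1 1 2) := by
  have h1 : 1 ∈ Set.Icc 1 K := ⟨le_rfl, hk.1.trans hk.2⟩
  have hp0 : ∀ i ∈ Set.Icc 1 K, 0 ≤ p0 ε (θ i) := fun i hi =>
    hε0.trans (le_p0 hε ((mem_Icc_of_antitoneOn hθ hi).2.trans hθ1))
  have hle2 : ∀ i ∈ Set.Icc 1 K, i ≠ 1 → θ i ≤ θ 2 := fun i ⟨hi1, hiK⟩ hi =>
    have h2i : 2 ≤ i := by omega
    hθ ⟨one_le_two, h2i.trans hiK⟩ ⟨hi1, hiK⟩ h2i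
  suffices (1 - ε) * θ k + p0 ε (θ k) * θ m ≤ (1 - ε) * θ 1 + p0 ε (θ 1) * θ 2 by
    simp only [reward, if_neg hmk, if_neg (show (2 : ℕ) ≠ 1 by decide), ite_true]
    linarith
  rcases eq_or_ne k 1 with rfl | hk1
  · have := mul_le_mul_of_nonneg_left (hle2 m hm hmk) (hp0 1 h1)
    linarith
  · calc (1 - ε) * θ k + p0 ε (θ k) * θ m
        ≤ (1 - ε) * θ k + p0 ε (θ k) * θ 1 := by
          have := mul_le_mul_of_nonneg_left (mem_Icc_of_antitoneOn hθ hm).2 (hp0 k hk)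
          linarith
      _ = (1 - ε) * θ 1 + p0 ε (θ 1) * θ k := measure_fallback_comm ε _ _
      _ ≤ (1 - ε) * θ 1 + p0 ε (θ 1) * θ 2 := by
          have := mul_le_mul_of_nonneg_left (hle2 k hk hk1) (hp0 1 h1)
          linarith

end Arms

theorem stmt2_general (K : ℕ) (θ : ℕ → ℝ)
    (h1 : θ 1 < 1) (hKpos : 0 < θ K)
    (hmono : ∀ i, 1 ≤ i → i < K → θ (i + 1) < θ i)
    (c ε : ℝ) (hc : 0 < c) (hε0 : 0 ≤ ε) (hε : ε < 1 / 2) :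
    ∀ u : Policy, validPolicy K u →
      reward θ ε c u
        ≤ max (θ 1) (-c + (1 - ε) * θ 1 + p0 ε (θ 1) * θ 2) := by
  have hθ : AntitoneOn θ (Set.Icc 1 K) :=
    (strictAntiOn_of_succ_lt Set.ordConnected_Icc fun i _ hi hi' =>
      hmono i hi.1 (Order.succ_le_iff.mp hi'.2)).antitoneOn
  have h12 : reward θ ε c (.meas 1 1 2) = -c + (1 - ε) * θ 1 + p0 ε (θ 1) * θ 2 := by
    simp [reward]
  rintro (k | ⟨k, l, m⟩) hu
  · exact le_max_of_le_left (mem_Icc_of_antitoneOn hθ hu).2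
  · obtain ⟨hk, hl, hm⟩ := hu
    by_cases hklm : m = k ∨ l ≠ k
    · exact le_max_of_le_left
        (reward_meas_le_theta_one hθ hKpos.le h1.le hc.le hε0 hε.le hk hl hm hklm)
    · push Not at hklm
      obtain ⟨hmk, rfl⟩ := hklm
      exact le_max_of_le_right
        (h12 ▸ reward_meas_self_le_reward_one_two hθ h1.le hε0 hε.le hk hm hmk)

/-- Fix `K ≥ 2`, arm means `1 > θ_1 > … > θ_K > 0`, cost `c > 0` and
`ε ∈ [0,1/2)`. Then every static policy `u` satisfies `μ(u) ≤ max(θ_1, μ((1,2)))`, where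
`μ((1,2)) = −c + (1−ε)θ_1 + p0(θ_1)θ_2`: the optimal static policy is either `(1)` or
`(1,2)`. -/
theorem stmt2 (K : ℕ) (hK : 2 ≤ K) (θ : ℕ → ℝ)
    (h1 : θ 1 < 1) (hKpos : 0 < θ K)
    (hmono : ∀ i, 1 ≤ i → i < K → θ (i + 1) < θ i)
    (c ε : ℝ) (hc : 0 < c) (hε0 : 0 ≤ ε) (hε : ε < 1 / 2) :
    ∀ u : Policy, validPolicy K u →
      reward θ ε c u
        ≤ max (θ 1) (-c + (1 - ε) * θ 1 + p0 ε (θ 1) * θ 2) :=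
  stmt2_general K θ h1 hKpos hmono c ε hc hε0 hε
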